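/- Let Y be an absolutely continuous random variable with finite mean, and let R be a missingness indicator independent of Y (MCAR) with P(R = 0) = p < α. Define the composite variable U = Y on {R = 1} and U = c on {R = 0} where c is below the essential infimum of Y. Then in general E[U | U > F_U^{-1}(α)] ≠ E[Y], and moreover E[U | U > F_U^{-1}(α)] = E[Y | Y > F^{-1}(α')] where α' satisfies (1−α')=(1−α)/(1−p); in particular if α > p and Y is not degenerate above its α'-quantile, the composite trimmed mean is strictly greater than E[Y]. -/

import Mathlib

/-!
Because `R` is independent of `Y` and `U = c < Y` on `{R = false}`, for `x ≥ c` one has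
`F_U(x) = p + (1 - p) F(x)`, so the `α`-quantile of `U` is the `α'`-quantile `q ≥ c` of `Y`.
Above `q` the variable `U` equals `Y` restricted to `{R = true}`, so by independence both the
numerator and the denominator of the truncated mean of `U` are those of `Y` times `1 - p`.
The strict inequality is the fact that the mean of `Y` above `q` exceeds `E[Y]` once
`{Y ≤ q}` (mass `≥ α' > 0`) and `{Y > q}` (nondegeneracy) both carry positive mass;
integrability of `Y` comes from identifying its law with `f · volume`.
-/

open MeasureTheory ProbabilityTheory Set

noncomputable def quant (F : ℝ → ℝ) (α : ℝ) : ℝ := sInf {x | α ≤ F x}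

noncomputable def condMeanAbove {Ω : Type*} [MeasurableSpace Ω]
    (μ : Measure Ω) (X : Ω → ℝ) (q : ℝ) : ℝ :=
  (∫ ω in {ω | q < X ω}, X ω ∂μ) / (μ {ω | q < X ω}).toReal

open Filter

section Density

variable {ν : Measure ℝ} [IsProbabilityMeasure ν] {f : ℝ → ℝ}

lemma integrableOn_Iic_of_measure_Iic_eq
    (h : ∀ x, ν (Iic x) = ENNReal.ofReal (∫ y in Iic x, f y)) (x : ℝ) :
    IntegrableOn f (Iic x) := by
  -- otherwise the integral is the junk value `0` on every `Iic y` with `y ≥ x`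
  by_contra hx
  have hpos : ∀ᶠ y in atTop, 0 < ν (Iic y) :=
    (tendsto_measure_Iic_atTop ν).eventually_const_lt (by simp)
  obtain ⟨y, hy, hxy⟩ := (hpos.and (eventually_ge_atTop x)).exists
  have hy' : ¬ IntegrableOn f (Iic y) := fun hf => hx (hf.mono_set (Iic_subset_Iic.2 hxy))
  simp [h y, integral_undef hy'] at hy

lemma eq_withDensity_of_measure_Iic_eq (hf0 : ∀ y, 0 ≤ f y)
    (h : ∀ x, ν (Iic x) = ENNReal.ofReal (∫ y in Iic x, f y)) :
    ν = volume.withDensity (fun y => ENNReal.ofReal (f y)) := by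
  refine Measure.ext_of_Iic _ _ fun x => ?_
  rw [h x, withDensity_apply _ measurableSet_Iic,
    ofReal_integral_eq_lintegral_ofReal (integrableOn_Iic_of_measure_Iic_eq h x)
      (ae_of_all _ hf0)]

lemma locallyIntegrable_of_measure_Iic_eq
    (h : ∀ x, ν (Iic x) = ENNReal.ofReal (∫ y in Iic x, f y)) :
    LocallyIntegrable f :=
  fun x => ⟨Iic (x + 1), Iic_mem_nhds (by linarith), integrableOn_Iic_of_measure_Iic_eq h _⟩

lemma integrable_id_of_measure_Iic_eq (hf0 : ∀ y, 0 ≤ f y)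
    (h : ∀ x, ν (Iic x) = ENNReal.ofReal (∫ y in Iic x, f y))
    (hmean : Integrable (fun y => y * f y)) : Integrable id ν := by
  have hfm : AEMeasurable (fun y => ENNReal.ofReal (f y)) :=
    (locallyIntegrable_of_measure_Iic_eq h).aestronglyMeasurable.aemeasurable.ennreal_ofReal
  rw [eq_withDensity_of_measure_Iic_eq hf0 h,
    integrable_withDensity_iff_integrable_smul₀' hfm (ae_of_all _ fun _ => ENNReal.ofReal_lt_top)]
  simpa [ENNReal.toReal_ofReal (hf0 _), mul_comm] using hmean

end Density

lemma le_cdf_quant (ν : Measure ℝ) [IsProbabilityMeasure ν] {α : ℝ} (h1 : α < 1) :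
    α ≤ cdf ν (quant (cdf ν) α) := by
  have hne : {x | α ≤ cdf ν x}.Nonempty :=
    ((tendsto_cdf_atTop ν).eventually_const_le h1).exists
  -- right continuity at the infimum; no lower bound on the set is needed, since a nonempty
  -- set of reals without one has elements below every real
  refine ge_of_tendsto
    (((cdf ν).right_continuous _).mono_left (nhdsWithin_mono _ Ioi_subset_Ici_self))
    (eventually_nhdsWithin_of_forall fun x hx => ?_)
  obtain ⟨y, hy, hyx⟩ := exists_lt_of_csInf_lt hne hx
  exact hy.trans (monotone_cdf ν hyx.le)

lemma mem_Ioo_of_one_sub_eq_div {p α α' : ℝ} (hpα : p < α) (hα1 : α < 1)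
    (hα' : 1 - α' = (1 - α) / (1 - p)) : α' ∈ Ioo 0 1 := by
  have hp1 : 0 < 1 - p := by linarith
  have hlt : (1 - α) / (1 - p) < 1 := (div_lt_one hp1).2 (by linarith)
  have hpos : 0 < (1 - α) / (1 - p) := div_pos (by linarith) hp1
  constructor <;> linarith

section Composite

variable {Ω : Type*} [MeasurableSpace Ω] {μ : Measure Ω} {X : Ω → ℝ} {R : Ω → Bool}
  {c : ℝ}

lemma ProbabilityTheory.IndepFun.measureReal_inter_preimage_eq_mul {β γ : Type*}
    [MeasurableSpace β] [MeasurableSpace γ] {X : Ω → β} {R : Ω → γ} (hXR : IndepFun X R μ)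
    {s : Set β} {t : Set γ} (hs : MeasurableSet s) (ht : MeasurableSet t) :
    μ.real (X ⁻¹' s ∩ R ⁻¹' t) = μ.real (X ⁻¹' s) * μ.real (R ⁻¹' t) := by
  simp only [measureReal_def, hXR.measure_inter_preimage_eq_mul s t hs ht, ENNReal.toReal_mul]

lemma setIntegral_inter_preimage_eq_mul {β : Type*} [MeasurableSpace β] {R : Ω → β}
    (hX : Measurable X) (hR : Measurable R) (hXR : IndepFun X R μ) {s : Set ℝ} {t : Set β}
    (hs : MeasurableSet s) (ht : MeasurableSet t) :
    ∫ ω in X ⁻¹' s ∩ R ⁻¹' t, X ω ∂μ = μ.real (R ⁻¹' t) * ∫ ω in X ⁻¹' s, X ω ∂μ := by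
  have hφ : Measurable (s.indicator id) := measurable_id.indicator hs
  have hψ : Measurable (t.indicator fun _ => (1 : ℝ)) := measurable_const.indicator ht
  have hprod : (X ⁻¹' s ∩ R ⁻¹' t).indicator X
      = (s.indicator id ∘ X) * (t.indicator (fun _ => 1) ∘ R) := by
    ext ω; by_cases hω : X ω ∈ s <;> by_cases hω' : R ω ∈ t <;> simp [hω, hω']
  rw [← integral_indicator ((hX hs).inter (hR ht)), hprod,
    (hXR.comp hφ hψ).integral_mul_eq_mul_integral (hφ.comp hX).aestronglyMeasurable
      (hψ.comp hR).aestronglyMeasurable, mul_comm]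
  congr 1
  · simp_rw [Function.comp_apply, ← indicator_comp_right]
    exact integral_indicator_one (hR ht)
  · simp_rw [← integral_indicator (hX hs), Function.comp_apply, ← indicator_comp_right]
    rfl

lemma measureReal_preimage_true_eq_one_sub [IsProbabilityMeasure μ] (hR : Measurable R) :
    μ.real (R ⁻¹' {true}) = 1 - μ.real (R ⁻¹' {false}) := by
  rw [← probReal_compl_eq_one_sub (hR (measurableSet_singleton false))]
  congr
  ext; simp

lemma measureReal_ite_le_of_le [IsProbabilityMeasure μ] (hX : Measurable X) (hR : Measurable R)
    (hXR : IndepFun X R μ) {x : ℝ} (hcx : c ≤ x) :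
    μ.real {ω | (if R ω then X ω else c) ≤ x}
      = μ.real (R ⁻¹' {false}) + μ.real {ω | X ω ≤ x} * (1 - μ.real (R ⁻¹' {false})) := by
  have hset : {ω | (if R ω then X ω else c) ≤ x}
      = R ⁻¹' {false} ∪ (X ⁻¹' Iic x ∩ R ⁻¹' {true}) := by
    ext ω; cases h : R ω <;> simp [h, hcx]
  have hdisj : Disjoint (R ⁻¹' {false}) (X ⁻¹' Iic x ∩ R ⁻¹' {true}) :=
    Disjoint.inter_right' _ ((disjoint_singleton.2 Bool.false_ne_true).preimage R)
  rw [hset,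
    measureReal_union hdisj ((hX measurableSet_Iic).inter (hR (measurableSet_singleton _))),
    hXR.measureReal_inter_preimage_eq_mul measurableSet_Iic (measurableSet_singleton _),
    measureReal_preimage_true_eq_one_sub hR]
  rfl

lemma measureReal_ite_le_le_of_lt [IsFiniteMeasure μ] {x : ℝ} (hxc : x < c) :
    μ.real {ω | (if R ω then X ω else c) ≤ x} ≤ μ.real {ω | X ω ≤ x} := by
  refine measureReal_mono fun ω hω => ?_
  cases h : R ω
  · simp only [h, mem_ofPred, Bool.false_eq_true, if_false] at hω
    exact absurd hω hxc.not_ge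
  · simpa [h] using hω

lemma measure_le_eq_zero_of_ae_lt (hc : ∀ᵐ ω ∂μ, c < X ω) {x : ℝ} (hxc : x < c) :
    μ {ω | X ω ≤ x} = 0 :=
  measure_mono_null (fun ω (hω : X ω ≤ x) => show ¬ c < X ω by linarith) (ae_iff.1 hc)

lemma quant_ite_eq [IsProbabilityMeasure μ] (hX : Measurable X) (hR : Measurable R)
    (hXR : IndepFun X R μ) (hc : ∀ᵐ ω ∂μ, c < X ω) {p α α' : ℝ}
    (hp : p = μ.real (R ⁻¹' {false})) (hpα : p < α) (hα1 : α < 1)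
    (hα' : 1 - α' = (1 - α) / (1 - p)) :
    quant (fun x => μ.real {ω | (if R ω then X ω else c) ≤ x}) α
      = quant (fun x => μ.real {ω | X ω ≤ x}) α' := by
  have hp1 : 0 < 1 - p := by linarith
  have hα'0 := (mem_Ioo_of_one_sub_eq_div hpα hα1 hα').1
  have hp0 : 0 ≤ p := hp ▸ measureReal_nonneg
  refine congrArg sInf (Set.ext fun x => ?_)
  change α ≤ μ.real {ω | (if R ω then X ω else c) ≤ x} ↔ α' ≤ μ.real {ω | X ω ≤ x}
  rcases lt_or_ge x c with hxc | hcx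
  · have hF0 : μ.real {ω | X ω ≤ x} = 0 := by
      rw [measureReal_def, measure_le_eq_zero_of_ae_lt hc hxc, ENNReal.toReal_zero]
    have := measureReal_ite_le_le_of_lt (μ := μ) (X := X) (R := R) hxc
    constructor <;> intro h <;> linarith
  · rw [measureReal_ite_le_of_le hX hR hXR hcx, ← hp,
      show α' = 1 - (1 - α) / (1 - p) by linarith, sub_le_comm, le_div_iff₀ hp1]
    constructor <;> intro h <;> linarith

lemma condMeanAbove_ite_eq (hX : Measurable X) (hR : Measurable R) (hXR : IndepFun X R μ)
    {q : ℝ} (hcq : c ≤ q) (hR1 : μ.real (R ⁻¹' {true}) ≠ 0) :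
    condMeanAbove μ (fun ω => if R ω then X ω else c) q = condMeanAbove μ X q := by
  have hset : {ω | q < if R ω then X ω else c} = X ⁻¹' Ioi q ∩ R ⁻¹' {true} := by
    ext ω; cases h : R ω <;> simp [h, hcq.not_gt]
  have hnum : ∫ ω in X ⁻¹' Ioi q ∩ R ⁻¹' {true}, (if R ω then X ω else c) ∂μ
      = ∫ ω in X ⁻¹' Ioi q ∩ R ⁻¹' {true}, X ω ∂μ :=
    setIntegral_congr_fun ((hX measurableSet_Ioi).inter (hR (measurableSet_singleton _)))
      fun ω hω => if_pos hω.2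
  simp only [condMeanAbove, ← measureReal_def, hset, hnum,
    setIntegral_inter_preimage_eq_mul hX hR hXR measurableSet_Ioi (measurableSet_singleton _),
    hXR.measureReal_inter_preimage_eq_mul measurableSet_Ioi (measurableSet_singleton _)]
  rw [mul_comm (μ.real (X ⁻¹' Ioi q)), mul_div_mul_left _ _ hR1]
  rfl

end Composite

lemma integral_lt_condMeanAbove {Ω : Type*} [MeasurableSpace Ω] {μ : Measure Ω}
    [IsProbabilityMeasure μ] {X : Ω → ℝ} (hX : Measurable X) (hXi : Integrable X μ) {q : ℝ}
    (hle : μ {ω | X ω ≤ q} ≠ 0) (hgt : μ {ω | q < X ω} ≠ 0) :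
    ∫ ω, X ω ∂μ < condMeanAbove μ X q := by
  set m := μ.real {ω | q < X ω}
  have hgtm : MeasurableSet {ω | q < X ω} := measurableSet_lt measurable_const hX
  have hlem : MeasurableSet {ω | X ω ≤ q} := measurableSet_le hX measurable_const
  have hcompl : {ω | X ω ≤ q} = {ω | q < X ω}ᶜ := by ext; simp
  have hm0 : 0 < m := ENNReal.toReal_pos hgt (measure_ne_top _ _)
  have hm1 : m < 1 := by
    have := ENNReal.toReal_pos hle (measure_ne_top _ _)
    rw [← measureReal_def, hcompl, probReal_compl_eq_one_sub hgtm] at this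
    linarith
  have hlow : ∫ ω in {ω | X ω ≤ q}, X ω ∂μ ≤ (1 - m) * q := by
    have := setIntegral_mono_on hXi.integrableOn (integrableOn_const (C := q))
      hlem fun ω hω => hω
    rw [hcompl]
    rwa [setIntegral_const, smul_eq_mul, hcompl, probReal_compl_eq_one_sub hgtm] at this
  have hhigh : m * q < ∫ ω in {ω | q < X ω}, X ω ∂μ := by
    have hpos : 0 < ∫ ω in {ω | q < X ω}, (X ω - q) ∂μ := by
      rw [setIntegral_pos_iff_support_of_nonneg_ae (ae_restrict_of_forall_mem hgtm
        fun ω hω => sub_nonneg.2 (le_of_lt hω)) (hXi.integrableOn.sub integrableOn_const)]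
      exact (pos_iff_ne_zero.2 hgt).trans_le
        (measure_mono fun ω hω => ⟨sub_ne_zero.2 (ne_of_gt hω), hω⟩)
    rwa [integral_sub hXi.integrableOn (integrableOn_const), setIntegral_const, smul_eq_mul,
      sub_pos] at hpos
  have hsplit := integral_add_compl hgtm hXi
  rw [← hcompl] at hsplit
  rw [condMeanAbove, ← measureReal_def, ← hsplit, lt_div_iff₀ hm0]
  nlinarith

theorem stmt15 {Ω : Type*} [MeasurableSpace Ω] (μ : Measure Ω) [IsProbabilityMeasure μ]
    (Y : Ω → ℝ) (R : Ω → Bool) (f : ℝ → ℝ) (α α' p c : ℝ)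
    (hY : Measurable Y) (hR : Measurable R)
    (hf0 : ∀ y, 0 ≤ f y)
    (hYd : ∀ x, μ {ω | Y ω ≤ x} = ENNReal.ofReal (∫ y in Iic x, f y))
    (hmean : Integrable (fun y => y * f y))
    (hindep : IndepFun Y R μ)
    (hp : p = (μ {ω | R ω = false}).toReal)
    (hα : α ∈ Ioo (0:ℝ) 1) (hpα : p < α)
    (hα' : 1 - α' = (1 - α) / (1 - p))
    (hc : ∀ᵐ ω ∂μ, c < Y ω)
    (F : ℝ → ℝ) (hF : F = fun x => (μ {ω | Y ω ≤ x}).toReal)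
    (U : Ω → ℝ) (hU : U = fun ω => if R ω then Y ω else c)
    (FU : ℝ → ℝ) (hFU : FU = fun x => (μ {ω | U ω ≤ x}).toReal)
    (hndeg : ¬ ∃ m : ℝ, ∀ᵐ ω ∂μ, quant F α' < Y ω → Y ω = m) :
    condMeanAbove μ U (quant FU α) = condMeanAbove μ Y (quant F α') ∧
    (∫ ω, Y ω ∂μ) < condMeanAbove μ U (quant FU α) := by
  have := Measure.isProbabilityMeasure_map (μ := μ) hY.aemeasurable
  have hYi : Integrable Y μ := by
    have hmap : ∀ x, μ.map Y (Iic x) = ENNReal.ofReal (∫ y in Iic x, f y) := fun x => by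
      rw [Measure.map_apply hY measurableSet_Iic]; exact hYd x
    exact (integrable_map_measure aestronglyMeasurable_id hY.aemeasurable).1
      (integrable_id_of_measure_Iic_eq hf0 hmap hmean)
  have hquant : quant FU α = quant F α' := by
    subst hF hFU hU
    exact quant_ite_eq hY hR hindep hc hp hpα hα.2 hα'
  have hFq : α' ≤ F (quant F α') := by
    have hcdf : F = cdf (μ.map Y) := by
      ext x; rw [hF, cdf_eq_real, measureReal_def, Measure.map_apply hY measurableSet_Iic]; rfl
    rw [hcdf]
    exact le_cdf_quant _ (mem_Ioo_of_one_sub_eq_div hpα hα.2 hα').2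
  set q := quant F α'
  have hle : μ {ω | Y ω ≤ q} ≠ 0 := fun h => by
    simp only [hF, h, ENNReal.toReal_zero] at hFq
    linarith [(mem_Ioo_of_one_sub_eq_div hpα hα.2 hα').1]
  have hcq : c ≤ q := le_of_not_gt fun hqc => hle (measure_le_eq_zero_of_ae_lt hc hqc)
  -- if `Y ≤ q` a.s., then `m = 0` witnesses degeneracy vacuously
  have hgt : μ {ω | q < Y ω} ≠ 0 := fun h =>
    hndeg ⟨0, (ae_iff.2 (by simpa using h)).mono fun ω hω hqω => absurd hqω hω⟩
  have hR1 : μ.real (R ⁻¹' {true}) ≠ 0 := by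
    rw [measureReal_preimage_true_eq_one_sub hR]
    linarith [show p = μ.real (R ⁻¹' {false}) from hp, hα.2]
  rw [hquant, hU, condMeanAbove_ite_eq hY hR hindep hcq hR1]
  exact ⟨rfl, integral_lt_condMeanAbove hY hYi hle hgt⟩
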